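/- Let H₁ and H₂ be finite-dimensional Hopf algebras over ℂ with bijective antipodes, and equip H₁ ⊗ H₂ with its tensor product Hopf algebra structure. Then a positive integer n satisfies the quasi-exponent condition for H₁ ⊗ H₂ if and only if n satisfies the quasi-exponent condition for both H₁ and H₂. Consequently qexp(H₁ ⊗ H₂) equals the least common multiple of qexp(H₁) and qexp(H₂). -/

import Mathlib

open TensorProduct

/-- The maps `T_n : H → H`: `T_0 = ι ∘ ε`, and `T_{n+1} = m ∘ (T_n ⊗ S^{-2n}) ∘ Δ`, i.e.
`T_n = m_n ∘ (Id ⊗ S⁻² ⊗ S⁻⁴ ⊗ ⋯ ⊗ S^{-2n+2}) ∘ Δ_n` where `m_n = m ∘ (m_{n-1} ⊗ Id)` and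
`Δ_n = (Δ_{n-1} ⊗ Id) ∘ Δ`.  Here `Sinv` is the inverse of the antipode. -/
noncomputable def qeT (H : Type*) [Ring H] [Bialgebra ℂ H] (Sinv : H →ₗ[ℂ] H) :
    ℕ → (H →ₗ[ℂ] H)
  | 0 => Algebra.linearMap ℂ H ∘ₗ Coalgebra.counit
  | n + 1 =>
      LinearMap.mul' ℂ H ∘ₗ TensorProduct.map (qeT H Sinv n) ((Sinv ∘ₗ Sinv) ^ n)
        ∘ₗ Coalgebra.comul

/-- A positive integer `n` satisfies the quasi-exponent condition for `H` if
`∑_{k=0}^N (-1)^k (N choose k) T_{nk} = 0` for some positive integer `N`. -/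
noncomputable def qexpCond (H : Type*) [Ring H] [Bialgebra ℂ H] (Sinv : H →ₗ[ℂ] H)
    (n : ℕ) : Prop :=
  ∃ N : ℕ, 0 < N ∧
    ∑ k ∈ Finset.range (N + 1), ((-1 : ℂ) ^ k * (N.choose k : ℂ)) • qeT H Sinv (n * k) = 0

/-!
Write `⋆` for the convolution product on `End H` and `σ = S⁻²`. Then `T_{k+1} = T_k ⋆ σᵏ`, and as
`σ` is an algebra automorphism this reads `T_{k+1} = Φ T_k` for the invertible operator
`Φ f = id ⋆ (σ ∘ f)`. So `n` satisfies the quasi-exponent condition iff `1 - Φⁿ` is nilpotent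
on `T₀`, and the `n ∈ ℤ` with this property form a subgroup of `ℤ`, generated by `qexp H`.

For `H₁ ⊗ H₂` one has `T_k = T¹_k ⊗ T²_k`. Slicing with `x ↦ x ⊗ 1` and the counit shows that
the condition for `H₁ ⊗ H₂` implies it for both factors; conversely
`1 - P ⊗ Q = (1 - P) ⊗ Q + 1 ⊗ (1 - Q)` is a sum of commuting operators that are nilpotent on
`T¹₀ ⊗ T²₀`. Hence the subgroup for `H₁ ⊗ H₂` is the intersection of those of the factors,
whose generator is the lcm of theirs.
-/

open WithConv

section Nilpotent

variable {R M : Type*} [Semiring R] [AddCommMonoid M] [Module R M]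

theorem Commute.mul_pow_apply_eq_zero {x y : Module.End R M} (h : Commute x y) {v : M} {N : ℕ}
    (hx : (x ^ N) v = 0) : ((x * y) ^ N) v = 0 := by
  rw [h.mul_pow, (h.pow_pow N N).eq, Module.End.mul_apply, hx, map_zero]

theorem exists_pos_pow_apply_eq_zero_iff {f : Module.End R M} {v : M} :
    (∃ N, 0 < N ∧ (f ^ N) v = 0) ↔ ∃ N, (f ^ N) v = 0 :=
  ⟨fun ⟨N, _, hN⟩ => ⟨N, hN⟩, fun ⟨N, hN⟩ =>
    ⟨N + 1, N.succ_pos, by rw [pow_succ', Module.End.mul_apply, hN, map_zero]⟩⟩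

end Nilpotent

section Unipotent

variable {R M : Type*} [CommRing R] [AddCommGroup M] [Module R M]

theorem Commute.add_pow_apply_eq_zero {p q : Module.End R M} (h : Commute p q) {v : M} {a b : ℕ}
    (hp : (p ^ a) v = 0) (hq : (q ^ b) v = 0) : ((p + q) ^ (a + b)) v = 0 := by
  have hv := Module.End.genEigenspace_inf_le_add p q 0 0 a b h
    ⟨Module.End.mem_genEigenspace_nat.mpr (by simpa using hp),
      Module.End.mem_genEigenspace_nat.mpr (by simpa using hq)⟩
  rw [add_zero, ← Nat.cast_add, Module.End.mem_genEigenspace_nat] at hv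
  simpa using hv

theorem Commute.one_sub_mul_pow_apply_eq_zero {x y : Module.End R M} (h : Commute x y) {v : M}
    {a b : ℕ} (hx : ((1 - x) ^ a) v = 0) (hy : ((1 - y) ^ b) v = 0) :
    ((1 - x * y) ^ (a + b)) v = 0 := by
  have hxy : Commute (1 - x) y := (Commute.one_left y).sub_left h
  have hsplit : 1 - x * y = (1 - x) * y + (1 - y) := by noncomm_ring
  rw [hsplit]
  exact (((Commute.one_right _).sub_right hxy).mul_left
    ((Commute.one_right y).sub_right (Commute.refl y))).add_pow_apply_eq_zero
    (hxy.mul_pow_apply_eq_zero hx) hy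

theorem sum_choose_smul_pow_mul_apply (Ψ : Module.End R M) (v : M) (n N : ℕ) :
    ∑ k ∈ Finset.range (N + 1), ((-1 : R) ^ k * N.choose k) • (Ψ ^ (n * k)) v =
      ((1 - Ψ ^ n) ^ N) v := by
  rw [← neg_add_eq_sub, (Commute.one_right _).add_pow, LinearMap.sum_apply]
  refine Finset.sum_congr rfl fun k _ => ?_
  rw [one_pow, mul_one, neg_pow (Ψ ^ n), ← pow_mul, ← (Nat.cast_commute _ _).eq,
    show (-1 : Module.End R M) = algebraMap R _ (-1) by simp, ← map_pow, ← Algebra.smul_def,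
    Module.End.mul_apply, Module.End.natCast_apply, LinearMap.smul_apply, mul_smul,
    Nat.cast_smul_eq_nsmul, map_nsmul, smul_comm]

def unipotentExponents (Φ : (Module.End R M)ˣ) (v : M) : AddSubgroup ℤ where
  carrier := {n | ∃ N : ℕ, (((1 : Module.End R M) - ↑(Φ ^ n)) ^ N) v = 0}
  zero_mem' := ⟨1, by simp⟩
  add_mem' := by
    rintro a b ⟨N, hN⟩ ⟨K, hK⟩
    refine ⟨N + K, ?_⟩
    rw [zpow_add, Units.val_mul]
    exact ((Commute.refl Φ).zpow_zpow a b).units_val.one_sub_mul_pow_apply_eq_zero hN hK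
  neg_mem' := by
    rintro a ⟨N, hN⟩
    refine ⟨N, ?_⟩
    have hcomm : Commute ((1 : Module.End R M) - ↑(Φ ^ a)) (-↑(Φ ^ (-a))) :=
      ((Commute.one_left _).sub_left ((Commute.refl Φ).zpow_zpow a (-a)).units_val).neg_right
    have hneg : (1 : Module.End R M) - ↑(Φ ^ (-a)) = (1 - ↑(Φ ^ a)) * -↑(Φ ^ (-a)) := by
      rw [mul_neg, sub_mul, one_mul, ← Units.val_mul, ← zpow_add, add_neg_cancel, zpow_zero,
        Units.val_one, neg_sub]
    rw [hneg]
    exact hcomm.mul_pow_apply_eq_zero hN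

theorem mem_unipotentExponents {Φ : (Module.End R M)ˣ} {v : M} {n : ℤ} :
    n ∈ unipotentExponents Φ v ↔ ∃ N : ℕ, (((1 : Module.End R M) - ↑(Φ ^ n)) ^ N) v = 0 :=
  Iff.rfl

end Unipotent

section TensorUnipotent

variable {R M₁ M₂ : Type*} [CommRing R] [AddCommGroup M₁] [Module R M₁] [AddCommGroup M₂]
  [Module R M₂]

theorem one_sub_map_pow_apply_tmul_eq_zero {P : Module.End R M₁} {Q : Module.End R M₂}
    {v : M₁} {w : M₂} {a b : ℕ} (hv : ((1 - P) ^ a) v = 0) (hw : ((1 - Q) ^ b) w = 0) :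
    ((1 - map P Q) ^ (a + b)) (v ⊗ₜ w) = 0 := by
  have hcomm : Commute (P.rTensor M₂) (Q.lTensor M₁) := by
    simp only [Commute, SemiconjBy, Module.End.mul_eq_comp, LinearMap.rTensor_comp_lTensor,
      LinearMap.lTensor_comp_rTensor]
  rw [← LinearMap.rTensor_comp_lTensor, ← Module.End.mul_eq_comp]
  refine hcomm.one_sub_mul_pow_apply_eq_zero ?_ ?_
  · have hP : 1 - P.rTensor M₂ = (1 - P).rTensor M₂ := by
      rw [LinearMap.rTensor_sub, Module.End.one_eq_id, Module.End.one_eq_id, LinearMap.rTensor_id]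
    rw [hP, LinearMap.rTensor_pow, LinearMap.rTensor_tmul, hv, zero_tmul]
  · have hQ : 1 - Q.lTensor M₁ = (1 - Q).lTensor M₁ := by
      rw [LinearMap.lTensor_sub, Module.End.one_eq_id, Module.End.one_eq_id, LinearMap.lTensor_id]
    rw [hQ, LinearMap.lTensor_pow, LinearMap.lTensor_tmul, hw, tmul_zero]

end TensorUnipotent

section IntSubgroup

open AddSubgroup

/-- `0` when `G = ⊥`, as `sInf ∅ = 0`. -/
noncomputable def leastPosNat (G : AddSubgroup ℤ) : ℕ := sInf {m : ℕ | 0 < m ∧ (m : ℤ) ∈ G}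

theorem leastPosNat_zmultiples (d : ℕ) : leastPosNat (zmultiples (d : ℤ)) = d := by
  rcases d.eq_zero_or_pos with rfl | hd
  · simp [leastPosNat, Nat.pos_iff_ne_zero]
  · refine le_antisymm (Nat.sInf_le ⟨hd, mem_zmultiples _⟩)
      (le_csInf ⟨d, hd, mem_zmultiples _⟩ fun m ⟨hm, hdm⟩ => Nat.le_of_dvd hm ?_)
    exact Int.natCast_dvd_natCast.mp (Int.mem_zmultiples_iff.mp hdm)

theorem exists_eq_zmultiples_natCast (G : AddSubgroup ℤ) : ∃ d : ℕ, G = zmultiples (d : ℤ) := by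
  obtain ⟨a, rfl⟩ := Int.subgroup_cyclic G
  exact ⟨a.natAbs, by rw [Int.zmultiples_natAbs, zmultiples_eq_closure]⟩

theorem leastPosNat_inf (G₁ G₂ : AddSubgroup ℤ) :
    leastPosNat (G₁ ⊓ G₂) = Nat.lcm (leastPosNat G₁) (leastPosNat G₂) := by
  obtain ⟨d₁, rfl⟩ := exists_eq_zmultiples_natCast G₁
  obtain ⟨d₂, rfl⟩ := exists_eq_zmultiples_natCast G₂
  rw [Int.zmultiples_inf, show Int.lcm d₁ d₂ = Nat.lcm d₁ d₂ from rfl]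
  simp only [leastPosNat_zmultiples]

end IntSubgroup

section Convolution

variable {R H : Type*} [CommSemiring R] [Semiring H] [Bialgebra R H]

noncomputable def twistedShift (σ : H →ₐ[R] H) : Module.End R (H →ₗ[R] H) where
  toFun f := (toConv LinearMap.id * toConv (σ.toLinearMap ∘ₗ f)).ofConv
  map_add' f g := by simp [LinearMap.comp_add, mul_add]
  map_smul' c f := by simp [LinearMap.comp_smul]

theorem twistedShift_apply (σ : H →ₐ[R] H) (f : H →ₗ[R] H) :
    twistedShift σ f = (toConv LinearMap.id * toConv (σ.toLinearMap ∘ₗ f)).ofConv :=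
  rfl

end Convolution

section Antipode

variable {R H : Type*} [CommSemiring R] [Semiring H] [HopfAlgebra R H]

theorem isUnit_twistedShift (σ : H ≃ₐ[R] H) : IsUnit (twistedShift (σ : H →ₐ[R] H)) := by
  let u : (WithConv (H →ₗ[R] H))ˣ :=
    ⟨toConv LinearMap.id, toConv (HopfAlgebra.antipode R), LinearMap.id_mul_antipode,
      LinearMap.antipode_mul_id⟩
  rw [Module.End.isUnit_iff]
  exact (WithConv.equiv _).bijective.comp ((Units.mulLeft_bijective u).comp
    ((WithConv.equiv _).symm.bijective.comp (LinearEquiv.congrRight σ.toLinearEquiv).bijective))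

theorem map_one_of_comp_antipode_eq_id {Sinv : H →ₗ[R] H}
    (hS : Sinv ∘ₗ HopfAlgebra.antipode R = LinearMap.id) : Sinv 1 = 1 := by
  simpa using LinearMap.congr_fun hS 1

def antipodeSqAlgEquiv (Sinv : H →ₗ[R] H) (hS : Sinv ∘ₗ HopfAlgebra.antipode R = LinearMap.id)
    (hS' : HopfAlgebra.antipode R ∘ₗ Sinv = LinearMap.id) : H ≃ₐ[R] H :=
  AlgEquiv.ofLinearEquiv
    (LinearEquiv.ofLinearMap (HopfAlgebra.antipode R ∘ₗ HopfAlgebra.antipode R) (Sinv ∘ₗ Sinv)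
      (by rw [LinearMap.comp_assoc, ← LinearMap.comp_assoc Sinv, hS', LinearMap.id_comp, hS'])
      (by rw [LinearMap.comp_assoc, ← LinearMap.comp_assoc (HopfAlgebra.antipode R), hS,
        LinearMap.id_comp, hS]))
    (by simp [HopfAlgebra.antipode_one])
    (fun a b => by simp [HopfAlgebra.antipode_mul_antidistrib])

end Antipode

section QuasiExponent

variable {H : Type*} [Ring H] [Bialgebra ℂ H] {Sinv : H →ₗ[ℂ] H}

theorem toConv_qeT_zero : toConv (qeT H Sinv 0) = 1 :=
  rfl

theorem toConv_qeT_succ (k : ℕ) :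
    toConv (qeT H Sinv (k + 1)) = toConv (qeT H Sinv k) * toConv ((Sinv ∘ₗ Sinv) ^ k) :=
  rfl

theorem qeT_apply_one (h1 : Sinv 1 = 1) (k : ℕ) : qeT H Sinv k 1 = 1 := by
  induction k with
  | zero => simp [qeT]
  | succ k ih =>
    have hpow : ((Sinv ∘ₗ Sinv) ^ k) 1 = 1 := by
      rw [Module.End.pow_apply]
      exact Function.iterate_fixed (by simp [h1]) k
    simp [qeT, Algebra.TensorProduct.one_def, ih, hpow]

theorem twistedShift_qeT {σ : H →ₐ[ℂ] H} (hσ : σ.toLinearMap = Sinv ∘ₗ Sinv) (k : ℕ) :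
    twistedShift σ (qeT H Sinv k) = qeT H Sinv (k + 1) := by
  induction k with
  | zero =>
    have hσ1 : σ.toLinearMap ∘ₗ qeT H Sinv 0 = qeT H Sinv 0 := by ext; simp [qeT]
    rw [twistedShift_apply, hσ1, ← ofConv_toConv (qeT H Sinv 1), toConv_qeT_succ, toConv_qeT_zero,
      pow_zero, mul_one, one_mul]
    rfl
  | succ k ih =>
    calc twistedShift σ (qeT H Sinv (k + 1))
        = (toConv LinearMap.id * (toConv (σ.toLinearMap ∘ₗ qeT H Sinv k) *
            toConv (σ.toLinearMap ∘ₗ (Sinv ∘ₗ Sinv) ^ k))).ofConv := by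
          rw [twistedShift_apply, ← ofConv_toConv (qeT H Sinv (k + 1)), toConv_qeT_succ,
            LinearMap.algHom_comp_convMul_distrib]
      _ = (toConv (twistedShift σ (qeT H Sinv k)) *
            toConv (σ.toLinearMap ∘ₗ (Sinv ∘ₗ Sinv) ^ k)).ofConv := by
          rw [← mul_assoc]
          rfl
      _ = qeT H Sinv (k + 2) := by
          rw [ih, hσ, ← Module.End.mul_eq_comp, ← pow_succ']
          rfl

theorem qeT_eq_twistedShift_pow_apply {σ : H →ₐ[ℂ] H} (hσ : σ.toLinearMap = Sinv ∘ₗ Sinv)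
    (k : ℕ) : qeT H Sinv k = (twistedShift σ ^ k) (qeT H Sinv 0) := by
  induction k with
  | zero => rfl
  | succ k ih => rw [pow_succ', Module.End.mul_apply, ← ih, twistedShift_qeT hσ]

theorem qexpCond_iff_exists_pow {σ : H →ₐ[ℂ] H} (hσ : σ.toLinearMap = Sinv ∘ₗ Sinv) (n : ℕ) :
    qexpCond H Sinv n ↔ ∃ N, 0 < N ∧ ((1 - twistedShift σ ^ n) ^ N) (qeT H Sinv 0) = 0 := by
  simp only [qexpCond, qeT_eq_twistedShift_pow_apply hσ (n * _), sum_choose_smul_pow_mul_apply]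

end QuasiExponent

section HopfQuasiExponent

variable {H : Type*} [Ring H] [HopfAlgebra ℂ H]

noncomputable def qexpExponents (Sinv : H →ₗ[ℂ] H)
    (hS : Sinv ∘ₗ HopfAlgebra.antipode ℂ = LinearMap.id)
    (hS' : HopfAlgebra.antipode ℂ ∘ₗ Sinv = LinearMap.id) : AddSubgroup ℤ :=
  unipotentExponents (isUnit_twistedShift (antipodeSqAlgEquiv Sinv hS hS').symm).unit
    (qeT H Sinv 0)

theorem qexpCond_iff_mem_qexpExponents {Sinv : H →ₗ[ℂ] H}
    (hS : Sinv ∘ₗ HopfAlgebra.antipode ℂ = LinearMap.id)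
    (hS' : HopfAlgebra.antipode ℂ ∘ₗ Sinv = LinearMap.id) (n : ℕ) :
    qexpCond H Sinv n ↔ (n : ℤ) ∈ qexpExponents Sinv hS hS' := by
  rw [qexpCond_iff_exists_pow (σ := (antipodeSqAlgEquiv Sinv hS hS').symm) rfl,
    exists_pos_pow_apply_eq_zero_iff]
  simp [qexpExponents, mem_unipotentExponents]

end HopfQuasiExponent

section TensorProduct

variable {H₁ H₂ : Type*} [Ring H₁] [Bialgebra ℂ H₁] [Ring H₂] [Bialgebra ℂ H₂]
  {Sinv₁ : H₁ →ₗ[ℂ] H₁} {Sinv₂ : H₂ →ₗ[ℂ] H₂}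

theorem qeT_tensorProduct (k : ℕ) :
    qeT (H₁ ⊗[ℂ] H₂) (map Sinv₁ Sinv₂) k = map (qeT H₁ Sinv₁ k) (qeT H₂ Sinv₂ k) := by
  induction k with
  | zero =>
    ext
    simp [qeT, Algebra.algebraMap_eq_smul_one, Algebra.TensorProduct.one_def, smul_tmul', smul_smul,
      mul_comm]
  | succ k ih =>
    rw [← ofConv_toConv (qeT _ _ (k + 1)), toConv_qeT_succ, ih, ← map_comp, TensorProduct.map_pow,
      map_convMul_map]
    rfl

theorem qexpCond_of_qexpCond_tensorProduct_left (h₂ : Sinv₂ 1 = 1) {n : ℕ}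
    (h : qexpCond (H₁ ⊗[ℂ] H₂) (map Sinv₁ Sinv₂) n) : qexpCond H₁ Sinv₁ n := by
  obtain ⟨N, hN, hsum⟩ := h
  refine ⟨N, hN, LinearMap.ext fun x => ?_⟩
  have hx := congr(TensorProduct.rid ℂ H₁ (LinearMap.lTensor H₁ Coalgebra.counit
    ($hsum (x ⊗ₜ (1 : H₂)))))
  simpa [qeT_tensorProduct, qeT_apply_one h₂] using hx

theorem qexpCond_of_qexpCond_tensorProduct_right (h₁ : Sinv₁ 1 = 1) {n : ℕ}
    (h : qexpCond (H₁ ⊗[ℂ] H₂) (map Sinv₁ Sinv₂) n) : qexpCond H₂ Sinv₂ n := by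
  obtain ⟨N, hN, hsum⟩ := h
  refine ⟨N, hN, LinearMap.ext fun y => ?_⟩
  have hy := congr(TensorProduct.lid ℂ H₂ (LinearMap.rTensor H₂ Coalgebra.counit
    ($hsum ((1 : H₁) ⊗ₜ y))))
  simpa [qeT_tensorProduct, qeT_apply_one h₁] using hy

theorem qexpCond_tensorProduct_of_qexpCond {σ₁ : H₁ →ₐ[ℂ] H₁} {σ₂ : H₂ →ₐ[ℂ] H₂}
    (hσ₁ : σ₁.toLinearMap = Sinv₁ ∘ₗ Sinv₁) (hσ₂ : σ₂.toLinearMap = Sinv₂ ∘ₗ Sinv₂) {n : ℕ}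
    (h₁ : qexpCond H₁ Sinv₁ n) (h₂ : qexpCond H₂ Sinv₂ n) :
    qexpCond (H₁ ⊗[ℂ] H₂) (map Sinv₁ Sinv₂) n := by
  obtain ⟨N₁, hN₁, h₁⟩ := (qexpCond_iff_exists_pow hσ₁ n).mp h₁
  obtain ⟨N₂, -, h₂⟩ := (qexpCond_iff_exists_pow hσ₂ n).mp h₂
  refine ⟨N₁ + N₂, by omega, ?_⟩
  have hqeT (k : ℕ) : qeT (H₁ ⊗[ℂ] H₂) (map Sinv₁ Sinv₂) k =
      homTensorHomMap (RingHom.id ℂ) H₁ H₂ H₁ H₂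
        ((map (twistedShift σ₁) (twistedShift σ₂) ^ k) (qeT H₁ Sinv₁ 0 ⊗ₜ qeT H₂ Sinv₂ 0)) := by
    rw [TensorProduct.map_pow, map_tmul, homTensorHomMap_apply, ← qeT_eq_twistedShift_pow_apply hσ₁,
      ← qeT_eq_twistedShift_pow_apply hσ₂, qeT_tensorProduct]
  have key := congr(homTensorHomMap (RingHom.id ℂ) H₁ H₂ H₁ H₂
    $(sum_choose_smul_pow_mul_apply (map (twistedShift σ₁) (twistedShift σ₂))
      (qeT H₁ Sinv₁ 0 ⊗ₜ qeT H₂ Sinv₂ 0) n (N₁ + N₂)))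
  rw [TensorProduct.map_pow, one_sub_map_pow_apply_tmul_eq_zero h₁ h₂, map_zero, map_sum] at key
  simpa only [map_smul, ← hqeT] using key

end TensorProduct

theorem qexpCond_tensorProduct_general (H₁ H₂ : Type) [Ring H₁] [HopfAlgebra ℂ H₁]
    [Ring H₂] [HopfAlgebra ℂ H₂]
    (Sinv₁ : H₁ →ₗ[ℂ] H₁)
    (hS₁ : Sinv₁ ∘ₗ HopfAlgebra.antipode (R := ℂ) (A := H₁) = LinearMap.id)
    (hS₁' : HopfAlgebra.antipode (R := ℂ) (A := H₁) ∘ₗ Sinv₁ = LinearMap.id)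
    (Sinv₂ : H₂ →ₗ[ℂ] H₂)
    (hS₂ : Sinv₂ ∘ₗ HopfAlgebra.antipode (R := ℂ) (A := H₂) = LinearMap.id)
    (hS₂' : HopfAlgebra.antipode (R := ℂ) (A := H₂) ∘ₗ Sinv₂ = LinearMap.id) :
    (∀ n : ℕ, 0 < n →
      (qexpCond (H₁ ⊗[ℂ] H₂) (TensorProduct.map Sinv₁ Sinv₂) n ↔
        qexpCond H₁ Sinv₁ n ∧ qexpCond H₂ Sinv₂ n)) ∧
      sInf {m : ℕ | 0 < m ∧ qexpCond (H₁ ⊗[ℂ] H₂) (TensorProduct.map Sinv₁ Sinv₂) m} =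
        Nat.lcm (sInf {m : ℕ | 0 < m ∧ qexpCond H₁ Sinv₁ m})
          (sInf {m : ℕ | 0 < m ∧ qexpCond H₂ Sinv₂ m}) := by
  have hiff (n : ℕ) : qexpCond (H₁ ⊗[ℂ] H₂) (map Sinv₁ Sinv₂) n ↔
      qexpCond H₁ Sinv₁ n ∧ qexpCond H₂ Sinv₂ n :=
    ⟨fun h => ⟨qexpCond_of_qexpCond_tensorProduct_left (map_one_of_comp_antipode_eq_id hS₂) h,
        qexpCond_of_qexpCond_tensorProduct_right (map_one_of_comp_antipode_eq_id hS₁) h⟩,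
      fun h => qexpCond_tensorProduct_of_qexpCond (σ₁ := (antipodeSqAlgEquiv Sinv₁ hS₁ hS₁').symm)
        (σ₂ := (antipodeSqAlgEquiv Sinv₂ hS₂ hS₂').symm) rfl rfl h.1 h.2⟩
  refine ⟨fun n _ => hiff n, ?_⟩
  simp only [hiff, qexpCond_iff_mem_qexpExponents hS₁ hS₁', qexpCond_iff_mem_qexpExponents hS₂ hS₂']
  exact leastPosNat_inf _ _

/-- For finite-dimensional Hopf algebras `H₁`, `H₂` over `ℂ` with bijective antipodes,
equip `H₁ ⊗ H₂` with its tensor product Hopf algebra structure (whose antipode is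
`S₁ ⊗ S₂`, with inverse `Sinv₁ ⊗ Sinv₂`).  A positive integer `n` satisfies the
quasi-exponent condition for `H₁ ⊗ H₂` iff it does so for both `H₁` and `H₂`;
consequently `qexp (H₁ ⊗ H₂) = lcm (qexp H₁) (qexp H₂)`. -/
theorem qexpCond_tensorProduct (H₁ H₂ : Type) [Ring H₁] [HopfAlgebra ℂ H₁]
    [FiniteDimensional ℂ H₁] [Ring H₂] [HopfAlgebra ℂ H₂] [FiniteDimensional ℂ H₂]
    (Sinv₁ : H₁ →ₗ[ℂ] H₁)
    (hS₁ : Sinv₁ ∘ₗ HopfAlgebra.antipode (R := ℂ) (A := H₁) = LinearMap.id)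
    (hS₁' : HopfAlgebra.antipode (R := ℂ) (A := H₁) ∘ₗ Sinv₁ = LinearMap.id)
    (Sinv₂ : H₂ →ₗ[ℂ] H₂)
    (hS₂ : Sinv₂ ∘ₗ HopfAlgebra.antipode (R := ℂ) (A := H₂) = LinearMap.id)
    (hS₂' : HopfAlgebra.antipode (R := ℂ) (A := H₂) ∘ₗ Sinv₂ = LinearMap.id) :
    (∀ n : ℕ, 0 < n →
      (qexpCond (H₁ ⊗[ℂ] H₂) (TensorProduct.map Sinv₁ Sinv₂) n ↔
        qexpCond H₁ Sinv₁ n ∧ qexpCond H₂ Sinv₂ n)) ∧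
      sInf {m : ℕ | 0 < m ∧ qexpCond (H₁ ⊗[ℂ] H₂) (TensorProduct.map Sinv₁ Sinv₂) m} =
        Nat.lcm (sInf {m : ℕ | 0 < m ∧ qexpCond H₁ Sinv₁ m})
          (sInf {m : ℕ | 0 < m ∧ qexpCond H₂ Sinv₂ m}) :=
  qexpCond_tensorProduct_general H₁ H₂ Sinv₁ hS₁ hS₁' Sinv₂ hS₂ hS₂'
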